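/- arXiv:1710.08115 — 3 statements merged into one kernel-verified Lean document; each statement's English description precedes it below -/
import Mathlib

section
/- Let f : ℝⁿ → ℝ be convex and differentiable, hₑ(x) = aₑᵀx + bₑ affine for e = 1,…,l, and gⱼ(x) = cⱼᵀx + dⱼ affine for j = 1,…,m. Define 𝔏(x, μ, λ) = f(x) + Σₑ μₑ hₑ(x) + Σⱼ λⱼ gⱼ(x). Then (x*, μ*, λ*) ∈ ℝⁿ × ℝˡ × ℝ≥0ᵐ is a saddle point of 𝔏 if and only if the KKT conditions hold: ∇f(x*) + Σₑ μₑ* aₑ + Σⱼ λⱼ* cⱼ = 0, hₑ(x*) = 0 for all e, gⱼ(x*) ≤ 0 for all j, λⱼ* ≥ 0 for all j, and λⱼ* gⱼ(x*) = 0 for all j. -/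
/-!
For fixed multipliers the Lagrangian is `f` plus an affine function of `x`, hence convex, and
a differentiable convex function is minimal exactly where its derivative vanishes: this is
stationarity. For fixed `x*` the Lagrangian is affine in `(μ, λ)`; it is bounded above by its
value at `(μ*, λ*)` on `ℝˡ × ℝ≥0ᵐ` exactly when the coefficients `hₑ(x*)` of the free
multipliers vanish, those `gⱼ(x*)` of the sign-constrained ones are nonpositive, and
`λ*` is supported where `gⱼ(x*) = 0`.
-/

open RealInnerProductSpace Finset

section FirstOrder

variable {E : Type*} [NormedAddCommGroup E] [NormedSpace ℝ E] {f : E → ℝ} {f' : E →L[ℝ] ℝ}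
  {s : Set E} {x : E}

theorem ConvexOn.add_le_of_hasFDerivAt (hf : ConvexOn ℝ s f) (hf' : HasFDerivAt f f' x) (hx : x ∈ s)
    {y : E} (hy : y ∈ s) : f x + f' (y - x) ≤ f y := by
  set L : ℝ →ᵃ[ℝ] E := AffineMap.lineMap x y
  have hderiv : HasDerivAt (f ∘ L) (f' (y - x)) 0 := by
    have hL : HasDerivAt L (y - x) 0 := AffineMap.hasDerivAt_lineMap
    exact hf'.comp_hasDerivAt_of_eq (0 : ℝ) hL (by simp [L])
  have hslope := (hf.comp_affineMap L).le_slope_of_hasDerivAt (x := 0) (y := 1)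
    (by simpa [L] using hx) (by simpa [L] using hy) one_pos hderiv
  simp only [slope_def_field, L, Function.comp_apply, AffineMap.lineMap_apply_zero,
    AffineMap.lineMap_apply_one, sub_zero, div_one] at hslope
  linarith

theorem ConvexOn.isMinOn_univ_iff_of_hasFDerivAt (hf : ConvexOn ℝ Set.univ f)
    (hf' : HasFDerivAt f f' x) : IsMinOn f Set.univ x ↔ f' = 0 := by
  refine ⟨fun hmin => (hmin.isLocalMin Filter.univ_mem).hasFDerivAt_eq_zero hf', ?_⟩
  rintro rfl y -
  simpa using hf.add_le_of_hasFDerivAt hf' (Set.mem_univ x) (Set.mem_univ y)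

end FirstOrder

section Multipliers

variable {ι κ : Type*} [Fintype ι] [Fintype κ]

theorem forall_sum_mul_le_iff {u μ₀ : ι → ℝ} :
    (∀ μ : ι → ℝ, ∑ i, μ i * u i ≤ ∑ i, μ₀ i * u i) ↔ ∀ i, u i = 0 := by
  refine ⟨fun H => ?_, fun hu μ => by simp [hu]⟩
  have hsq : ∑ i, u i ^ 2 ≤ 0 := by
    have := H (μ₀ + u)
    simp only [Pi.add_apply, add_mul, sum_add_distrib, ← sq] at this
    linarith
  intro i
  simpa using (sum_eq_zero_iff_of_nonneg fun i _ => sq_nonneg (u i)).mp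
    (hsq.antisymm (sum_nonneg fun i _ => sq_nonneg (u i))) i (mem_univ i)

theorem forall_nonneg_sum_mul_le_iff {u lam₀ : κ → ℝ} (hlam₀ : ∀ j, 0 ≤ lam₀ j) :
    (∀ lam : κ → ℝ, (∀ j, 0 ≤ lam j) → ∑ j, lam j * u j ≤ ∑ j, lam₀ j * u j) ↔
      (∀ j, u j ≤ 0) ∧ ∀ j, lam₀ j * u j = 0 := by
  classical
  constructor
  · intro H
    have hu : ∀ j, u j ≤ 0 := fun j => by
      have hsingle : (0 : κ → ℝ) ≤ Pi.single j 1 := Pi.single_nonneg.2 zero_le_one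
      have := H (lam₀ + Pi.single j 1) fun i => add_nonneg (hlam₀ i) (hsingle i)
      simpa [add_mul, sum_add_distrib, Pi.single_apply] using this
    have hterm : ∀ j ∈ univ, lam₀ j * u j ≤ 0 := fun j _ =>
      mul_nonpos_of_nonneg_of_nonpos (hlam₀ j) (hu j)
    have hsum : ∑ j, lam₀ j * u j = 0 :=
      (sum_nonpos hterm).antisymm (by simpa using H 0 fun _ => le_rfl)
    exact ⟨hu, fun j => (sum_eq_zero_iff_of_nonpos hterm).mp hsum j (mem_univ j)⟩
  · rintro ⟨hu, hslack⟩ lam hlam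
    simpa [hslack] using sum_nonpos fun j _ => mul_nonpos_of_nonneg_of_nonpos (hlam j) (hu j)

theorem forall_sum_mul_add_sum_mul_le_iff {u μ₀ : ι → ℝ} {w lam₀ : κ → ℝ}
    (hlam₀ : ∀ j, 0 ≤ lam₀ j) :
    (∀ (μ : ι → ℝ) (lam : κ → ℝ), (∀ j, 0 ≤ lam j) →
        ∑ i, μ i * u i + ∑ j, lam j * w j ≤ ∑ i, μ₀ i * u i + ∑ j, lam₀ j * w j) ↔
      (∀ i, u i = 0) ∧ (∀ j, w j ≤ 0) ∧ ∀ j, lam₀ j * w j = 0 := by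
  rw [← forall_sum_mul_le_iff, ← forall_nonneg_sum_mul_le_iff hlam₀]
  refine ⟨fun H => ⟨fun μ => by simpa using H μ lam₀ hlam₀,
    fun lam hlam => by simpa using H μ₀ lam hlam⟩, ?_⟩
  rintro ⟨H1, H2⟩ μ lam hlam
  exact add_le_add (H1 μ) (H2 lam hlam)

end Multipliers

theorem saddle_point_iff_KKT_general (n l m : ℕ)
    (f : EuclideanSpace ℝ (Fin n) → ℝ)
    (gradf : EuclideanSpace ℝ (Fin n) → EuclideanSpace ℝ (Fin n))
    (hf : ConvexOn ℝ Set.univ f)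
    (hgrad : ∀ x, HasGradientAt f (gradf x) x)
    (a : Fin l → EuclideanSpace ℝ (Fin n)) (b : Fin l → ℝ)
    (c : Fin m → EuclideanSpace ℝ (Fin n)) (d : Fin m → ℝ)
    (h : Fin l → EuclideanSpace ℝ (Fin n) → ℝ)
    (g : Fin m → EuclideanSpace ℝ (Fin n) → ℝ)
    (hh : ∀ e x, h e x = ⟪a e, x⟫ + b e)
    (hg : ∀ j x, g j x = ⟪c j, x⟫ + d j)
    (La : (EuclideanSpace ℝ (Fin n)) → (Fin l → ℝ) → (Fin m → ℝ) → ℝ)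
    (hLa : ∀ x μ lam, La x μ lam =
      f x + (∑ e, μ e * h e x) + (∑ j, lam j * g j x))
    (xs : EuclideanSpace ℝ (Fin n)) (μs : Fin l → ℝ) (lams : Fin m → ℝ)
    (hlams : ∀ j, 0 ≤ lams j) :
    (∀ (x : EuclideanSpace ℝ (Fin n)) (μ : Fin l → ℝ) (lam : Fin m → ℝ),
        (∀ j, 0 ≤ lam j) → La xs μ lam ≤ La xs μs lams ∧ La xs μs lams ≤ La x μs lams)
    ↔
    (gradf xs + (∑ e, μs e • a e) + (∑ j, lams j • c j) = 0 ∧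
      (∀ e, h e xs = 0) ∧ (∀ j, g j xs ≤ 0) ∧ (∀ j, 0 ≤ lams j) ∧
      (∀ j, lams j * g j xs = 0)) := by
  set v := ∑ e, μs e • a e + ∑ j, lams j • c j
  have hLx : (La · μs lams) =
      fun x => f x + ⟪v, x⟫ + (∑ e, μs e * b e + ∑ j, lams j * d j) := by
    funext x
    simp only [hLa, hh, hg, v, inner_add_left, sum_inner, real_inner_smul_left, mul_add,
      sum_add_distrib]
    ring
  have hconv : ConvexOn ℝ Set.univ (La · μs lams) := by
    rw [hLx]
    exact (hf.add ((innerₛₗ ℝ v).convexOn convex_univ)).add_const _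
  have hderiv :
      HasFDerivAt (La · μs lams) (InnerProductSpace.toDual ℝ _ (gradf xs + v)) xs := by
    rw [hLx, map_add]
    exact ((hgrad xs).hasFDerivAt.add (innerSL ℝ v).hasFDerivAt).add_const _
  have hprimal : (∀ x, La xs μs lams ≤ La x μs lams) ↔ gradf xs + v = 0 := by
    rw [← (InnerProductSpace.toDual ℝ _).map_eq_zero_iff,
      ← hconv.isMinOn_univ_iff_of_hasFDerivAt hderiv, isMinOn_univ_iff]
  have hdual : (∀ μ lam, (∀ j, 0 ≤ lam j) → La xs μ lam ≤ La xs μs lams) ↔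
      (∀ e, h e xs = 0) ∧ (∀ j, g j xs ≤ 0) ∧ ∀ j, lams j * g j xs = 0 := by
    simp only [hLa, add_assoc, add_le_add_iff_left]
    exact forall_sum_mul_add_sum_mul_le_iff hlams
  constructor
  · intro H
    obtain ⟨hh0, hg0, hslack⟩ := hdual.1 fun μ lam hlam => (H xs μ lam hlam).1
    exact ⟨by simpa [v, add_assoc] using hprimal.1 fun x => (H x μs lams hlams).2, hh0, hg0,
      hlams, hslack⟩
  · rintro ⟨hstat, hh0, hg0, -, hslack⟩ x μ lam hlam
    exact ⟨hdual.2 ⟨hh0, hg0, hslack⟩ μ lam hlam,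
      hprimal.2 (by simpa [v, add_assoc] using hstat) x⟩

theorem saddle_point_iff_KKT (n l m : ℕ)
    (f : EuclideanSpace ℝ (Fin n) → ℝ)
    (gradf : EuclideanSpace ℝ (Fin n) → EuclideanSpace ℝ (Fin n))
    (hf : ConvexOn ℝ Set.univ f)
    (hdiff : Differentiable ℝ f)
    (hgrad : ∀ x, HasGradientAt f (gradf x) x)
    (a : Fin l → EuclideanSpace ℝ (Fin n)) (b : Fin l → ℝ)
    (c : Fin m → EuclideanSpace ℝ (Fin n)) (d : Fin m → ℝ)
    (h : Fin l → EuclideanSpace ℝ (Fin n) → ℝ)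
    (g : Fin m → EuclideanSpace ℝ (Fin n) → ℝ)
    (hh : ∀ e x, h e x = ⟪a e, x⟫ + b e)
    (hg : ∀ j x, g j x = ⟪c j, x⟫ + d j)
    (La : (EuclideanSpace ℝ (Fin n)) → (Fin l → ℝ) → (Fin m → ℝ) → ℝ)
    (hLa : ∀ x μ lam, La x μ lam =
      f x + (∑ e, μ e * h e x) + (∑ j, lam j * g j x))
    (xs : EuclideanSpace ℝ (Fin n)) (μs : Fin l → ℝ) (lams : Fin m → ℝ)
    (hlams : ∀ j, 0 ≤ lams j) :
    (∀ (x : EuclideanSpace ℝ (Fin n)) (μ : Fin l → ℝ) (lam : Fin m → ℝ),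
        (∀ j, 0 ≤ lam j) → La xs μ lam ≤ La xs μs lams ∧ La xs μs lams ≤ La x μs lams)
    ↔
    (gradf xs + (∑ e, μs e • a e) + (∑ j, lams j • c j) = 0 ∧
      (∀ e, h e xs = 0) ∧ (∀ j, g j xs ≤ 0) ∧ (∀ j, 0 ≤ lams j) ∧
      (∀ j, lams j * g j xs = 0)) :=
  saddle_point_iff_KKT_general n l m f gradf hf hgrad a b c d h g hh hg La hLa xs μs lams hlams
end

section
/- Let L ∈ ℝⁿˣⁿ be the Laplacian of an undirected connected graph and let U₁ ∈ ℝⁿˣ⁽ⁿ⁻¹⁾ have orthonormal columns all orthogonal to 𝟙ₙ. Then the block matrix A = [[-(I + L), -L U₁], [U₁ᵀ L, 0]] ∈ ℝ⁽²ⁿ⁻¹⁾ˣ⁽²ⁿ⁻¹⁾ is Hurwitz, i.e., every eigenvalue of A has strictly negative real part. -/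
/-!
Let `(x, y)` be an eigenvector of `A` for the eigenvalue `μ`, with `B = L U₁`. Pairing the first
block row `-(I + L) x - B y = μ x` with `x` and substituting the second one, `Bᴴ x = μ y`, into the
cross term gives the balance
`x* (I + L) x + conj μ ‖y‖² + μ ‖x‖² = 0`, whose real part reads
`Re μ (‖x‖² + ‖y‖²) = -Re (x* (I + L) x) < 0` as soon as `x ≠ 0`. If `x = 0`, the first row
forces `B y = 0`, and `B` is injective because the kernel of the Laplacian of a connected graph
consists of the constant vectors, which `U₁ᵀ` annihilates.
-/

open Matrix

open scoped ComplexOrder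

namespace Matrix

lemma exists_mulVec_eq_smul_of_mem_spectrum {K n : Type*} [Field K] [Fintype n] [DecidableEq n]
    {M : Matrix n n K} {μ : K} (hμ : μ ∈ spectrum K M) : ∃ v ≠ 0, M *ᵥ v = μ • v := by
  rw [← spectrum_toLin', ← Module.End.hasEigenvalue_iff_mem_spectrum] at hμ
  obtain ⟨v, hv⟩ := hμ.exists_hasEigenvector
  rw [Module.End.hasEigenvector_iff, Module.End.mem_eigenspace_iff, toLin'_apply] at hv
  exact ⟨v, hv.2, hv.1⟩

lemma star_dotProduct_mulVec_eq_of_conjTranspose_mulVec {R m k : Type*} [CommSemiring R]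
    [StarRing R] [Fintype m] [Fintype k] {B : Matrix m k R} {x : m → R} {y : k → R} {μ : R}
    (h : Bᴴ *ᵥ x = μ • y) : star x ⬝ᵥ (B *ᵥ y) = star μ * (star y ⬝ᵥ y) := by
  rw [dotProduct_mulVec, ← conjTranspose_conjTranspose B, ← star_mulVec, h, star_smul,
    smul_dotProduct, smul_eq_mul]

variable {𝕜 m k : Type*} [RCLike 𝕜] [Fintype m] [Fintype k]

theorem re_lt_zero_of_mem_spectrum_fromBlocks [DecidableEq m] [DecidableEq k]
    {D : Matrix m m 𝕜} {B : Matrix m k 𝕜} (hD : D.PosDef) (hB : Function.Injective B.mulVec)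
    {μ : 𝕜} (hμ : μ ∈ spectrum 𝕜 (fromBlocks (-D) (-B) Bᴴ 0)) : RCLike.re μ < 0 := by
  obtain ⟨v, hv0, hv⟩ := exists_mulVec_eq_smul_of_mem_spectrum hμ
  obtain ⟨x, y, rfl⟩ : ∃ x y, v = Sum.elim x y := ⟨_, _, (Sum.elim_comp_inl_inr v).symm⟩
  rw [fromBlocks_mulVec] at hv
  have hrow₁ : -(D *ᵥ x) - B *ᵥ y = μ • x :=
    funext fun i => by simpa [sub_eq_add_neg, neg_mulVec] using congrFun hv (.inl i)
  have hrow₂ : Bᴴ *ᵥ x = μ • y := funext fun j => by simpa using congrFun hv (.inr j)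
  by_cases hx : x = 0
  · have hy : y = 0 := hB.eq_iff' (mulVec_zero B) |>.mp <| by simpa [hx] using hrow₁
    exact absurd (by simp [hx, hy]) hv0
  have hbalance :
      star x ⬝ᵥ (D *ᵥ x) + star μ * (star y ⬝ᵥ y) + μ * (star x ⬝ᵥ x) = 0 := by
    rw [← star_dotProduct_mulVec_eq_of_conjTranspose_mulVec hrow₂, ← smul_eq_mul,
      ← dotProduct_smul, ← hrow₁]
    simp only [dotProduct_sub, dotProduct_neg]
    ring
  obtain ⟨hd, -⟩ := RCLike.pos_iff.mp (hD.dotProduct_mulVec_pos hx)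
  obtain ⟨ha, ha'⟩ := RCLike.nonneg_iff.mp (dotProduct_star_self_nonneg x)
  obtain ⟨hb, hb'⟩ := RCLike.nonneg_iff.mp (dotProduct_star_self_nonneg y)
  have hre := congrArg RCLike.re hbalance
  simp only [map_add, RCLike.mul_re, ha', hb', RCLike.star_def, RCLike.conj_re, mul_zero,
    sub_zero, map_zero] at hre
  nlinarith

lemma PosSemidef.map_algebraMap {S : Matrix m m ℝ} (hS : S.PosSemidef) :
    (S.map (algebraMap ℝ 𝕜)).PosSemidef := by
  classical
  open scoped MatrixOrder in
  obtain ⟨B, rfl⟩ := CStarAlgebra.nonneg_iff_eq_star_mul_self.mp hS.nonneg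
  rw [star_eq_conjTranspose, Matrix.map_mul, conjTranspose_map _ fun _ => by simp]
  exact posSemidef_conjTranspose_mul_self _

lemma mulVec_injective_map_algebraMap {B : Matrix m k ℝ}
    (hB : Function.Injective B.mulVec) : Function.Injective (B.map (algebraMap ℝ 𝕜)).mulVec := by
  classical
  have hunit : IsUnit (Bᵀ * B) := by
    simpa using (PosDef.conjTranspose_mul_self B hB).isUnit
  have hinj : Function.Injective ((Bᵀ * B).map (algebraMap ℝ 𝕜)).mulVec :=
    mulVec_injective_iff_isUnit.mpr (hunit.map (RingHom.mapMatrix (algebraMap ℝ 𝕜)))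
  rw [Matrix.map_mul] at hinj
  exact .of_comp (f := (Bᵀ.map _).mulVec) fun z w h => hinj (by simpa [mulVec_mulVec] using h)

end Matrix

namespace SimpleGraph

variable {V k : Type*} [Fintype V] [DecidableEq V] [Fintype k] [DecidableEq k]
  {G : SimpleGraph V} [DecidableRel G.Adj]

theorem mulVec_injective_lapMatrix_mul (hG : G.Connected) {U : Matrix V k ℝ}
    (hU : Uᵀ * U = 1) (hU1 : Uᵀ *ᵥ (fun _ => 1) = 0) :
    Function.Injective (G.lapMatrix ℝ * U).mulVec := by
  refine (injective_iff_map_eq_zero (G.lapMatrix ℝ * U).mulVecLin).mpr fun y hy => ?_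
  rw [mulVecLin_apply, ← mulVec_mulVec, lapMatrix_mulVec_eq_zero_iff_forall_reachable] at hy
  obtain ⟨i₀⟩ := hG.nonempty
  have hconst : U *ᵥ y = (U *ᵥ y) i₀ • fun _ => 1 :=
    funext fun i => by simpa using hy i i₀ (hG.preconnected i i₀)
  calc y = Uᵀ *ᵥ (U *ᵥ y) := by rw [mulVec_mulVec, hU, one_mulVec]
    _ = 0 := by rw [hconst, mulVec_smul, hU1, smul_zero]

end SimpleGraph

theorem block_matrix_hurwitz (n : ℕ)
    (G : SimpleGraph (Fin n)) [DecidableRel G.Adj]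
    (hconn : G.Connected)
    (L : Matrix (Fin n) (Fin n) ℝ) (hL : L = G.lapMatrix ℝ)
    (U₁ : Matrix (Fin n) (Fin (n - 1)) ℝ)
    (horth : U₁ᵀ * U₁ = 1)
    (hperp : U₁ᵀ.mulVec (fun _ => (1 : ℝ)) = 0)
    (A : Matrix (Fin n ⊕ Fin (n - 1)) (Fin n ⊕ Fin (n - 1)) ℝ)
    (hA : A = Matrix.fromBlocks (-(1 + L)) (-(L * U₁)) (U₁ᵀ * L) 0) :
    ∀ μ ∈ spectrum ℂ (A.map (algebraMap ℝ ℂ)), μ.re < 0 := by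
  intro μ hμ
  have hD : ((1 + L).map (algebraMap ℝ ℂ)).PosDef := by
    rw [Matrix.map_add _ (map_add _), Matrix.map_one _ (map_zero _) (map_one _)]
    exact PosDef.one.add_posSemidef (hL ▸ (G.posSemidef_lapMatrix ℝ).map_algebraMap)
  have hB : Function.Injective ((L * U₁).map (algebraMap ℝ ℂ)).mulVec :=
    mulVec_injective_map_algebraMap (hL ▸ G.mulVec_injective_lapMatrix_mul hconn horth hperp)
  have hblocks : A.map (algebraMap ℝ ℂ) = fromBlocks (-(1 + L).map (algebraMap ℝ ℂ))
      (-(L * U₁).map (algebraMap ℝ ℂ)) ((L * U₁).map (algebraMap ℝ ℂ))ᴴ 0 := by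
    have hLsymm : Lᵀ = L := hL ▸ G.isSymm_lapMatrix ℝ
    rw [hA, fromBlocks_map, ← conjTranspose_map _ fun _ => by simp,
      conjTranspose_eq_transpose_of_trivial, transpose_mul, hLsymm,
      Matrix.map_neg _ (map_neg _), Matrix.map_neg _ (map_neg _), Matrix.map_zero _ (map_zero _)]
  exact re_lt_zero_of_mem_spectrum_fromBlocks hD hB (hblocks ▸ hμ)
end

section
/- Let L be the Laplacian of an undirected connected graph on n vertices and u ∈ ℝⁿ a constant vector. Every solution (ξ(t), ζ(t)) of the linear system ξ̇ = -(I + L)ξ - Lζ + u, ζ̇ = Lξ with arbitrary initial conditions remains bounded, and ξ(t) converges exponentially to (1/n)(𝟙ₙᵀu)𝟙ₙ as t → ∞. -/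
/-!
Let `s = (𝟙ᵀu / n) 𝟙` and choose `ζ*` with `L ζ* = u - s` and `𝟙ᵀζ* = 𝟙ᵀζ(0)`; it exists because
`L + 𝟙𝟙ᵀ` is positive definite for a connected graph. The errors `x = ξ - s`, `z = ζ - ζ*` obey
`ẋ = -x - Lx - Lz`, `ż = Lx`, and `𝟙ᵀz` stays `0` because `𝟙ᵀL = 0`. On `𝟙^⊥` the Laplacian is
coercive, `zᵀLz ≥ μ |z|²`, and we may take `μ ≤ 1`. The energy `V = |x|² + |z|² + μ ⟨x, z⟩` is
comparable to `|x|² + |z|²`, and its cross term contributes `-μ zᵀLz` to `V̇`; with Young's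
inequality this gives `V̇ ≤ -(μ²/6) V`, hence exponential decay of `x` and `z`.
-/

open Matrix

namespace Matrix

variable {ι : Type*} [Fintype ι]

theorem IsSymm.dotProduct_mulVec_comm {A : Matrix ι ι ℝ} (hA : A.IsSymm) (v w : ι → ℝ) :
    v ⬝ᵥ A *ᵥ w = w ⬝ᵥ A *ᵥ v := by
  rw [dotProduct_mulVec, ← mulVec_transpose, hA.eq, dotProduct_comm]

theorem PosSemidef.two_mul_dotProduct_mulVec_le {A : Matrix ι ι ℝ} (hA : A.PosSemidef)
    (v w : ι → ℝ) {c : ℝ} (hc : 0 < c) :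
    2 * (v ⬝ᵥ A *ᵥ w) ≤ c * (v ⬝ᵥ A *ᵥ v) + (w ⬝ᵥ A *ᵥ w) / c := by
  have hsymm : w ⬝ᵥ A *ᵥ v = v ⬝ᵥ A *ᵥ w :=
    (isHermitian_iff_isSymm.1 hA.isHermitian).dotProduct_mulVec_comm w v
  have hsq := hA.dotProduct_mulVec_nonneg (c • v - w)
  simp only [star_trivial, mulVec_sub, mulVec_smul, dotProduct_sub, sub_dotProduct,
    dotProduct_smul, smul_dotProduct, smul_eq_mul, hsymm] at hsq
  rw [← sub_nonneg]
  have key : c * (v ⬝ᵥ A *ᵥ v) + (w ⬝ᵥ A *ᵥ w) / c - 2 * (v ⬝ᵥ A *ᵥ w) =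
      (c * (c * (v ⬝ᵥ A *ᵥ v) - v ⬝ᵥ A *ᵥ w) - (c * (v ⬝ᵥ A *ᵥ w) - w ⬝ᵥ A *ᵥ w)) / c := by
    field_simp
    ring
  rw [key]
  exact div_nonneg hsq hc.le

end Matrix

section DotProduct

variable {ι : Type*} [Fintype ι]

theorem dotProduct_self_nonneg (v : ι → ℝ) : 0 ≤ v ⬝ᵥ v :=
  Finset.sum_nonneg fun i _ => mul_self_nonneg (v i)

theorem two_mul_abs_dotProduct_le (x z : ι → ℝ) : 2 * |x ⬝ᵥ z| ≤ x ⬝ᵥ x + z ⬝ᵥ z := by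
  classical
  have h := PosSemidef.one.two_mul_dotProduct_mulVec_le x z one_pos
  have h' := PosSemidef.one.two_mul_dotProduct_mulVec_le (-x) z one_pos
  simp only [one_mulVec, neg_dotProduct, dotProduct_neg, neg_neg, one_mul, div_one] at h h'
  rcases abs_cases (x ⬝ᵥ z) with ⟨h_abs, -⟩ | ⟨h_abs, -⟩ <;> rw [h_abs] <;> linarith

theorem abs_mul_dotProduct_le {μ : ℝ} (hμ : |μ| ≤ 1) (x z : ι → ℝ) :
    |μ * (x ⬝ᵥ z)| ≤ (x ⬝ᵥ x + z ⬝ᵥ z) / 2 := by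
  rw [abs_mul]
  nlinarith [two_mul_abs_dotProduct_le x z, abs_nonneg μ, abs_nonneg (x ⬝ᵥ z)]

theorem dotProduct_self_le_card_mul_norm_sq (v : ι → ℝ) :
    v ⬝ᵥ v ≤ Fintype.card ι * ‖v‖ ^ 2 := by
  calc v ⬝ᵥ v = ∑ i, ‖v i‖ ^ 2 := by simp [dotProduct, sq]
    _ ≤ ∑ _i : ι, ‖v‖ ^ 2 :=
      Finset.sum_le_sum fun i _ => pow_le_pow_left₀ (norm_nonneg _) (norm_le_pi_norm v i) 2
    _ = Fintype.card ι * ‖v‖ ^ 2 := by simp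

theorem norm_le_sqrt_dotProduct_self (v : ι → ℝ) : ‖v‖ ≤ √(v ⬝ᵥ v) := by
  refine (pi_norm_le_iff_of_nonneg (Real.sqrt_nonneg _)).2 fun i => ?_
  rw [Real.norm_eq_abs, ← Real.sqrt_sq_eq_abs]
  refine Real.sqrt_le_sqrt ?_
  calc v i ^ 2 ≤ ∑ j, v j ^ 2 :=
        Finset.single_le_sum (f := fun j => v j ^ 2) (fun j _ => sq_nonneg _) (Finset.mem_univ i)
    _ = v ⬝ᵥ v := by simp [dotProduct, sq]

end DotProduct

theorem Matrix.PosDef.exists_pos_mul_dotProduct_self_le {ι : Type*} [Fintype ι]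
    {A : Matrix ι ι ℝ} (hA : A.PosDef) : ∃ μ > 0, ∀ v, μ * (v ⬝ᵥ v) ≤ v ⬝ᵥ A *ᵥ v := by
  obtain ⟨m, hm, hmin⟩ := (isCompact_sphere (0 : ι → ℝ) 1).exists_forall_le'
    (f := fun v => v ⬝ᵥ A *ᵥ v) (by fun_prop) fun v hv => by
      simpa using hA.dotProduct_mulVec_pos (ne_zero_of_mem_unit_sphere ⟨v, hv⟩)
  refine ⟨m / (Fintype.card ι + 1), by positivity, fun v => ?_⟩
  rcases eq_or_ne v 0 with rfl | hv
  · simp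
  have hv' : 0 < ‖v‖ := norm_pos_iff.2 hv
  have hsphere : m ≤ ‖v‖⁻¹ ^ 2 * (v ⬝ᵥ A *ᵥ v) := by
    have := hmin (‖v‖⁻¹ • v) (by simp [norm_smul, hv'.ne'])
    simpa only [mulVec_smul, dotProduct_smul, smul_dotProduct, smul_eq_mul, sq, mul_assoc]
      using this
  rw [inv_pow, inv_mul_eq_div, le_div_iff₀ (by positivity)] at hsphere
  calc m / (Fintype.card ι + 1) * (v ⬝ᵥ v)
      ≤ m / (Fintype.card ι + 1) * ((Fintype.card ι + 1) * ‖v‖ ^ 2) := by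
        gcongr
        linarith [dotProduct_self_le_card_mul_norm_sq v, sq_nonneg ‖v‖]
    _ = m * ‖v‖ ^ 2 := by field_simp
    _ ≤ v ⬝ᵥ A *ᵥ v := hsphere

theorem HasDerivAt.dotProduct {ι : Type*} [Fintype ι] {f g : ℝ → ι → ℝ} {f' g' : ι → ℝ}
    {t : ℝ} (hf : HasDerivAt f f' t) (hg : HasDerivAt g g' t) :
    HasDerivAt (fun s => f s ⬝ᵥ g s) (f' ⬝ᵥ g t + f t ⬝ᵥ g') t :=
  (HasDerivAt.fun_sum (u := Finset.univ) fun i _ =>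
    (hasDerivAt_pi.1 hf i).mul (hasDerivAt_pi.1 hg i)).congr_deriv
    (by rw [Finset.sum_add_distrib]; rfl)

theorem one_dotProduct_eq_of_hasDerivAt {ι : Type*} [Fintype ι] {A : Matrix ι ι ℝ}
    (hA : 1 ᵥ* A = 0) {ξ ζ : ℝ → ι → ℝ} (hζ : ∀ t, HasDerivAt ζ (A *ᵥ ξ t) t) (t : ℝ) :
    1 ⬝ᵥ ζ t = 1 ⬝ᵥ ζ 0 := by
  have h : ∀ s, HasDerivAt (fun s => 1 ⬝ᵥ ζ s) 0 s := fun s =>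
    ((hasDerivAt_const s 1).dotProduct (hζ s)).congr_deriv (by simp [dotProduct_mulVec, hA])
  exact is_const_of_deriv_eq_zero (fun s => (h s).differentiableAt) (fun s => (h s).deriv) t 0

theorem le_mul_exp_neg_of_hasDerivAt {V V' : ℝ → ℝ} {α : ℝ}
    (hV : ∀ t, HasDerivAt V (V' t) t) (hV' : ∀ t, V' t ≤ -α * V t) {t : ℝ} (ht : 0 ≤ t) :
    V t ≤ V 0 * Real.exp (-α * t) := by
  have hg : ∀ s, HasDerivAt (fun s => V s * Real.exp (α * s))
      ((V' s + α * V s) * Real.exp (α * s)) s := fun s =>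
    ((hV s).fun_mul ((hasDerivAt_id' s).const_mul α).exp).congr_deriv (by ring)
  have hanti : Antitone fun s => V s * Real.exp (α * s) :=
    antitone_of_deriv_nonpos (fun s => (hg s).differentiableAt) fun s => by
      rw [(hg s).deriv]
      exact mul_nonpos_of_nonpos_of_nonneg (by linarith [hV' s]) (Real.exp_pos _).le
  have := mul_le_mul_of_nonneg_right (hanti ht) (Real.exp_pos (-α * t)).le
  simpa [mul_assoc, ← Real.exp_add] using this

namespace SimpleGraph

variable {V : Type*} [Fintype V] [DecidableEq V] {G : SimpleGraph V} [DecidableRel G.Adj]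

variable (G) in
theorem one_vecMul_lapMatrix : 1 ᵥ* G.lapMatrix ℝ = 0 := by
  rw [← mulVec_transpose, (isSymm_lapMatrix (R := ℝ) G).eq]
  exact lapMatrix_mulVec_const_eq_zero G

variable (G) in
theorem lapMatrix_add_vecMulVec_one_mulVec (v : V → ℝ) :
    (G.lapMatrix ℝ + vecMulVec 1 1) *ᵥ v = G.lapMatrix ℝ *ᵥ v + (1 ⬝ᵥ v) • 1 := by
  rw [add_mulVec, vecMulVec_mulVec, op_smul_eq_smul]

variable (G) in
theorem dotProduct_lapMatrix_add_vecMulVec_one_mulVec (v : V → ℝ) :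
    v ⬝ᵥ (G.lapMatrix ℝ + vecMulVec 1 1) *ᵥ v = v ⬝ᵥ G.lapMatrix ℝ *ᵥ v + (1 ⬝ᵥ v) ^ 2 := by
  rw [lapMatrix_add_vecMulVec_one_mulVec, dotProduct_add, dotProduct_smul, dotProduct_one,
    one_dotProduct, smul_eq_mul, sq]

theorem Connected.posDef_lapMatrix_add_vecMulVec_one (hG : G.Connected) :
    (G.lapMatrix ℝ + vecMulVec 1 1).PosDef := by
  have hL := posSemidef_lapMatrix ℝ G
  refine .of_dotProduct_mulVec_pos ?_ fun v hv => ?_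
  · simpa using (hL.add (posSemidef_vecMulVec_self_star (1 : V → ℝ))).isHermitian
  rw [star_trivial, dotProduct_lapMatrix_add_vecMulVec_one_mulVec]
  obtain ⟨i, hi⟩ := Function.ne_iff.1 hv
  by_contra! hle
  have hLv_nonneg := hL.dotProduct_mulVec_nonneg v
  rw [star_trivial] at hLv_nonneg
  have hLv : G.lapMatrix ℝ *ᵥ v = 0 := by
    rw [← hL.dotProduct_mulVec_zero_iff, star_trivial]
    nlinarith [sq_nonneg (1 ⬝ᵥ v)]
  have hsum : 1 ⬝ᵥ v = 0 := by nlinarith [sq_nonneg (1 ⬝ᵥ v)]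
  have hconst : v = fun _ => v i := funext fun j =>
    ((lapMatrix_mulVec_eq_zero_iff_forall_reachable G).1 hLv i j (hG.preconnected i j)).symm
  rw [hconst, one_dotProduct] at hsum
  simp only [Finset.sum_const, Finset.card_univ, nsmul_eq_mul, mul_eq_zero, Nat.cast_eq_zero]
    at hsum
  exact hi (hsum.resolve_left (Fintype.card_pos_iff.2 ⟨i⟩).ne')

theorem Connected.exists_pos_mul_dotProduct_self_le (hG : G.Connected) :
    ∃ μ > 0, ∀ z : V → ℝ, 1 ⬝ᵥ z = 0 → μ * (z ⬝ᵥ z) ≤ z ⬝ᵥ G.lapMatrix ℝ *ᵥ z := by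
  obtain ⟨μ, hμ, h⟩ := hG.posDef_lapMatrix_add_vecMulVec_one.exists_pos_mul_dotProduct_self_le
  refine ⟨μ, hμ, fun z hz => ?_⟩
  have h := h z
  rwa [dotProduct_lapMatrix_add_vecMulVec_one_mulVec, hz, sq, mul_zero, add_zero] at h

theorem Connected.exists_lapMatrix_mulVec_eq (hG : G.Connected) {p : V → ℝ}
    (hp : 1 ⬝ᵥ p = 0) (c : ℝ) : ∃ y, G.lapMatrix ℝ *ᵥ y = p ∧ 1 ⬝ᵥ y = c := by
  set M := G.lapMatrix ℝ + vecMulVec 1 1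
  have hM : IsUnit M.det :=
    (isUnit_iff_isUnit_det M).1 hG.posDef_lapMatrix_add_vecMulVec_one.isUnit
  set y := M⁻¹ *ᵥ (p + c • 1)
  have hy : G.lapMatrix ℝ *ᵥ y + (1 ⬝ᵥ y) • 1 = p + c • 1 := by
    rw [← lapMatrix_add_vecMulVec_one_mulVec, mulVec_mulVec, mul_nonsing_inv _ hM, one_mulVec]
  have hcard : (Fintype.card V : ℝ) ≠ 0 := by
    have := hG.nonempty
    positivity
  have hsum : 1 ⬝ᵥ y = c := by
    have h := congrArg (1 ⬝ᵥ ·) hy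
    simp only [dotProduct_add, dotProduct_mulVec, one_vecMul_lapMatrix, zero_dotProduct,
      dotProduct_smul, one_dotProduct_one, hp, smul_eq_mul, zero_add] at h
    exact mul_right_cancel₀ hcard h
  refine ⟨y, ?_, hsum⟩
  rw [hsum] at hy
  exact add_right_cancel hy

end SimpleGraph

section ConsensusEnergy

variable {ι : Type*} [Fintype ι] {L : Matrix ι ι ℝ} {μ : ℝ}

def consensusEnergy (μ : ℝ) (x z : ι → ℝ) : ℝ :=
  x ⬝ᵥ x + z ⬝ᵥ z + μ * (x ⬝ᵥ z)

def consensusEnergyRate (L : Matrix ι ι ℝ) (μ : ℝ) (x z : ι → ℝ) : ℝ :=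
  -2 * (x ⬝ᵥ x) - 2 * (x ⬝ᵥ L *ᵥ x) +
    μ * (x ⬝ᵥ L *ᵥ x - x ⬝ᵥ z - x ⬝ᵥ L *ᵥ z - z ⬝ᵥ L *ᵥ z)

theorem dotProduct_self_add_le_two_mul_consensusEnergy (hμ : |μ| ≤ 1) (x z : ι → ℝ) :
    x ⬝ᵥ x + z ⬝ᵥ z ≤ 2 * consensusEnergy μ x z := by
  have := (abs_le.1 (abs_mul_dotProduct_le hμ x z)).1
  unfold consensusEnergy
  linarith

theorem hasDerivAt_consensusEnergy (hL : L.IsSymm) (μ : ℝ) {x z : ℝ → ι → ℝ} {t : ℝ}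
    (hx : HasDerivAt x (-x t - L *ᵥ x t - L *ᵥ z t) t) (hz : HasDerivAt z (L *ᵥ x t) t) :
    HasDerivAt (fun s => consensusEnergy μ (x s) (z s))
      (consensusEnergyRate L μ (x t) (z t)) t := by
  refine ((hx.dotProduct hx).add (hz.dotProduct hz) |>.add
    ((hx.dotProduct hz).const_mul μ)).congr_deriv ?_
  simp only [consensusEnergyRate, neg_dotProduct, sub_dotProduct, dotProduct_neg, dotProduct_sub]
  rw [dotProduct_comm (L *ᵥ x t) (x t), dotProduct_comm (L *ᵥ z t) (x t),
    dotProduct_comm (L *ᵥ x t) (z t), dotProduct_comm (L *ᵥ z t) (z t),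
    hL.dotProduct_mulVec_comm (z t) (x t)]
  ring

theorem consensusEnergyRate_le (hL : L.PosSemidef) (hμ : 0 < μ) (hμ1 : μ ≤ 1) {x z : ι → ℝ}
    (hz : μ * (z ⬝ᵥ z) ≤ z ⬝ᵥ L *ᵥ z) :
    consensusEnergyRate L μ x z ≤ -(μ ^ 2 / 6) * consensusEnergy μ x z := by
  classical
  -- Young's inequality, weighted so that `-μ zᵀLz ≤ -μ² |z|²` absorbs the `z`-terms
  have hxz := PosSemidef.one.two_mul_dotProduct_mulVec_le (-x) (μ • z) two_pos
  have hLxz := hL.two_mul_dotProduct_mulVec_le (-x) z one_pos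
  simp only [one_mulVec, mulVec_neg, neg_dotProduct, dotProduct_neg, neg_neg, dotProduct_smul,
    smul_dotProduct, smul_eq_mul, one_mul, div_one] at hxz hLxz
  have hE := (abs_le.1 (abs_mul_dotProduct_le (abs_le.2 ⟨by linarith, hμ1⟩) x z)).2
  have hLx := hL.dotProduct_mulVec_nonneg x
  rw [star_trivial] at hLx
  unfold consensusEnergyRate consensusEnergy
  linarith [dotProduct_self_nonneg x, mul_le_mul_of_nonneg_left hLxz hμ.le,
    mul_le_mul_of_nonneg_left hz hμ.le,
    mul_le_mul_of_nonneg_left hE (sq_nonneg μ), mul_nonneg (sub_nonneg.2 hμ1) hLx,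
    mul_le_mul_of_nonneg_right (pow_le_one₀ hμ.le hμ1 : μ ^ 2 ≤ 1) (dotProduct_self_nonneg x)]

theorem consensusEnergy_le_mul_exp (hL : L.PosSemidef) (hμ : 0 < μ) (hμ1 : μ ≤ 1)
    {x z : ℝ → ι → ℝ} (hx : ∀ t, HasDerivAt x (-x t - L *ᵥ x t - L *ᵥ z t) t)
    (hz : ∀ t, HasDerivAt z (L *ᵥ x t) t) (hgap : ∀ t, μ * (z t ⬝ᵥ z t) ≤ z t ⬝ᵥ L *ᵥ z t)
    {t : ℝ} (ht : 0 ≤ t) :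
    consensusEnergy μ (x t) (z t) ≤
      consensusEnergy μ (x 0) (z 0) * Real.exp (-(μ ^ 2 / 6) * t) :=
  le_mul_exp_neg_of_hasDerivAt
    (fun s => hasDerivAt_consensusEnergy (isHermitian_iff_isSymm.1 hL.isHermitian) μ (hx s) (hz s))
    (fun s => consensusEnergyRate_le hL hμ hμ1 (hgap s)) ht

theorem exists_norm_le_mul_exp_of_hasDerivAt (hL : L.PosSemidef) (hμ : 0 < μ)
    {x z : ℝ → ι → ℝ} (hx : ∀ t, HasDerivAt x (-x t - L *ᵥ x t - L *ᵥ z t) t)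
    (hz : ∀ t, HasDerivAt z (L *ᵥ x t) t) (hgap : ∀ t, μ * (z t ⬝ᵥ z t) ≤ z t ⬝ᵥ L *ᵥ z t) :
    ∃ C ≥ 0, ∃ α > 0, ∀ t ≥ 0,
      ‖x t‖ ≤ C * Real.exp (-α * t) ∧ ‖z t‖ ≤ C * Real.exp (-α * t) := by
  set ε := min μ 1
  have hε : 0 < ε := lt_min hμ one_pos
  have hε1 : |ε| ≤ 1 := abs_le.2 ⟨by linarith, min_le_right _ _⟩
  have hgap' (t : ℝ) : ε * (z t ⬝ᵥ z t) ≤ z t ⬝ᵥ L *ᵥ z t :=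
    (mul_le_mul_of_nonneg_right (min_le_left _ _) (dotProduct_self_nonneg (z t))).trans (hgap t)
  set E₀ := consensusEnergy ε (x 0) (z 0)
  refine ⟨√(2 * E₀), Real.sqrt_nonneg _, ε ^ 2 / 12, by positivity, fun t ht => ?_⟩
  have hsq : x t ⬝ᵥ x t + z t ⬝ᵥ z t ≤ 2 * E₀ * Real.exp (-(ε ^ 2 / 6) * t) :=
    (dotProduct_self_add_le_two_mul_consensusEnergy hε1 _ _).trans (by
      linarith [consensusEnergy_le_mul_exp hL hε (min_le_right _ _) hx hz hgap' ht])
  have hnorm (v : ι → ℝ) (hv : v ⬝ᵥ v ≤ x t ⬝ᵥ x t + z t ⬝ᵥ z t) :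
      ‖v‖ ≤ √(2 * E₀) * Real.exp (-(ε ^ 2 / 12) * t) := by
    rw [← Real.sqrt_sq (Real.exp_pos _).le, ← Real.sqrt_mul', ← Real.exp_nat_mul]
    · refine (norm_le_sqrt_dotProduct_self v).trans
        (Real.sqrt_le_sqrt (hv.trans (hsq.trans_eq ?_)))
      ring_nf
    · positivity
  exact ⟨hnorm _ (by linarith [dotProduct_self_nonneg (z t)]),
    hnorm _ (by linarith [dotProduct_self_nonneg (x t)])⟩

end ConsensusEnergy

open SimpleGraph in
theorem dynamic_average_consensus_convergence (n : ℕ) (hn : 0 < n)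
    (G : SimpleGraph (Fin n)) [DecidableRel G.Adj]
    (hconn : G.Connected)
    (L : Matrix (Fin n) (Fin n) ℝ) (hL : L = G.lapMatrix ℝ)
    (u : Fin n → ℝ)
    (ξ ζ : ℝ → (Fin n → ℝ))
    (hξ : ∀ t, HasDerivAt ξ (-(ξ t) - L.mulVec (ξ t) - L.mulVec (ζ t) + u) t)
    (hζ : ∀ t, HasDerivAt ζ (L.mulVec (ξ t)) t) :
    (∃ M : ℝ, ∀ t ≥ (0 : ℝ), ‖ξ t‖ ≤ M ∧ ‖ζ t‖ ≤ M) ∧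
    (∃ C α : ℝ, 0 < α ∧ ∀ t ≥ (0 : ℝ),
      ‖ξ t - (fun _ => (∑ i, u i) / n)‖ ≤ C * Real.exp (-α * t)) := by
  subst hL
  set s : Fin n → ℝ := fun _ => (∑ i, u i) / n
  have hLs : G.lapMatrix ℝ *ᵥ s = 0 :=
    (lapMatrix_mulVec_eq_zero_iff_forall_adj G).2 fun _ _ _ => rfl
  have hus : 1 ⬝ᵥ (u - s) = 0 := by
    have hn' : (n : ℝ) ≠ 0 := Nat.cast_ne_zero.2 hn.ne'
    simp [s, dotProduct_sub, one_dotProduct, mul_div_cancel₀ _ hn']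
  obtain ⟨ζs, hLζs, hζs⟩ := hconn.exists_lapMatrix_mulVec_eq hus (1 ⬝ᵥ ζ 0)
  have hx (t : ℝ) : HasDerivAt (fun t => ξ t - s)
      (-(ξ t - s) - G.lapMatrix ℝ *ᵥ (ξ t - s) - G.lapMatrix ℝ *ᵥ (ζ t - ζs)) t :=
    ((hξ t).sub_const s).congr_deriv (by rw [mulVec_sub, mulVec_sub, hLs, hLζs]; abel)
  have hz (t : ℝ) : HasDerivAt (fun t => ζ t - ζs) (G.lapMatrix ℝ *ᵥ (ξ t - s)) t :=
    ((hζ t).sub_const ζs).congr_deriv (by rw [mulVec_sub, hLs, sub_zero])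
  have hz_sum (t : ℝ) : 1 ⬝ᵥ (ζ t - ζs) = 0 := by
    rw [dotProduct_sub, one_dotProduct_eq_of_hasDerivAt (one_vecMul_lapMatrix G) hζ t, hζs,
      sub_self]
  obtain ⟨μ, hμ, hgap⟩ := hconn.exists_pos_mul_dotProduct_self_le
  obtain ⟨C, hC, α, hα, hdecay⟩ := exists_norm_le_mul_exp_of_hasDerivAt
    (posSemidef_lapMatrix ℝ G) hμ hx hz fun t => hgap _ (hz_sum t)
  refine ⟨⟨C + ‖s‖ + ‖ζs‖, fun t ht => ?_⟩, C, α, hα, fun t ht => (hdecay t ht).1⟩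
  have hexp : C * Real.exp (-α * t) ≤ C :=
    mul_le_of_le_one_right hC (Real.exp_le_one_iff.2 (by nlinarith))
  constructor
  · linarith [norm_le_norm_sub_add (ξ t) s, (hdecay t ht).1, norm_nonneg ζs]
  · linarith [norm_le_norm_sub_add (ζ t) ζs, (hdecay t ht).2, norm_nonneg s]
end
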